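/- arXiv:1606.06533 — 2 statements merged into one kernel-verified Lean document; each statement's English description precedes it below -/
import Mathlib

section
/- Subadditivity of the localized minimal energies: let F ∈ ℝ^{n×d} and ω ∈ Ω. If A, A₁, …, A_M are half-open axis-parallel boxes with integer corners (i.e. sets of the form Π_{i=1}^d [a_i,b_i) with a,b ∈ ℤ^d), the A₁,…,A_M are pairwise disjoint, and A = A₁ ∪ … ∪ A_M, then m_F(ω;A) ≤ Σ_{i=1}^M m_F(ω;A_i). -/
open MeasureTheory Filter Metric Set
open scoped Classical
open scoped ENNReal Topology Pointwise

noncomputable section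

namespace StochHom

/-- `ℝ^d` with the Euclidean norm. -/
abbrev Rd (d : ℕ) : Type := EuclideanSpace ℝ (Fin d)

/-- `ℝ^n` with the Euclidean norm. -/
abbrev Rn (n : ℕ) : Type := EuclideanSpace ℝ (Fin n)

/-- The lattice `ℤ^d`. -/
abbrev Zd (d : ℕ) : Type := Fin d → ℤ

variable {d n : ℕ}

/-- The embedding of the lattice `ℤ^d` into `ℝ^d`. -/
def toRd (z : Zd d) : Rd d := (EuclideanSpace.equiv (Fin d) ℝ).symm fun i => (z i : ℝ)

/-- The standard basis vectors `eᵢ` of `ℤ^d`. -/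
def stdb (i : Fin d) : Zd d := fun j => if j = i then 1 else 0

/-- The interaction range `R = max {4√d, max_{b ∈ ℰ₀} |b|}`. -/
def irange (d : ℕ) (E0 : Finset (Zd d)) : ℝ :=
  max (4 * Real.sqrt d) (sSup ((fun b : Zd d => ‖toRd b‖) '' (E0 : Set (Zd d))))

variable {Ω : Type*} [MeasurableSpace Ω]

/-- The energy `E₁(ω; u, ℤ^d ∩ A)`. -/
def energy1 (τ : Zd d → Ω → Ω) (E0 : Finset (Zd d)) (V : Zd d → Ω → Rn n → ℝ)
    (ω : Ω) (u : Zd d → Rn n) (A : Set (Rd d)) : ℝ :=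
  ∑' z : Zd d, if toRd z ∈ A then
      ∑ b ∈ E0, V b (τ z ω) ((‖toRd b‖)⁻¹ • (u (z + b) - u z)) else 0

/-- The scaled energy `E_ε(ω; u, A)`, where a function `u : εℤ^d → ℝ^n` is identified with a
function on `ℤ^d` via `z ↦ u(εz)`, so that `∂_b^ε u (z) = (u (z+b) - u z)/(ε |b|)`. -/
def energyE (τ : Zd d → Ω → Ω) (E0 : Finset (Zd d)) (V : Zd d → Ω → Rn n → ℝ)
    (ε : ℝ) (ω : Ω) (u : Zd d → Rn n) (A : Set (Rd d)) : ℝ :=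
  ε ^ d * ∑' z : Zd d, if ε • toRd z ∈ A then
      ∑ b ∈ E0, V b (τ z ω) ((ε * ‖toRd b‖)⁻¹ • (u (z + b) - u z)) else 0

/-- The localized minimal energy `m_F(ω; A)`. -/
def mF (τ : Zd d → Ω → Ω) (E0 : Finset (Zd d)) (V : Zd d → Ω → Rn n → ℝ)
    (ω : Ω) (F : Rd d →L[ℝ] Rn n) (A : Set (Rd d)) : ℝ :=
  ⨅ φ : {φ : Zd d → Rn n // ∀ z : Zd d, infDist (toRd z) Aᶜ ≤ irange d E0 → φ z = 0},
    energy1 τ E0 V ω (fun z => F (toRd z) + φ.1 z) A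

/-- The half-open cube `[0,k)^d ⊂ ℝ^d`. -/
def cube (d k : ℕ) : Set (Rd d) := {x | ∀ i, 0 ≤ x i ∧ x i < (k : ℝ)}

/-- The homogenized energy density `W₀(F) = inf_{k ≥ 1} k⁻ᵈ E[m_F(·, [0,k)^d)]`. -/
def W0 (P : Measure Ω) (τ : Zd d → Ω → Ω) (E0 : Finset (Zd d))
    (V : Zd d → Ω → Rn n → ℝ) (F : Rd d →L[ℝ] Rn n) : ℝ :=
  ⨅ k : {k : ℕ // 0 < k}, (((k : ℕ) : ℝ) ^ d)⁻¹ * ∫ ω, mF τ E0 V ω F (cube d k) ∂P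

/-- Half-open axis-parallel box `Π_i [aᵢ, bᵢ)`. -/
def halfBox (a b : Fin d → ℝ) : Set (Rd d) := {x | ∀ i, a i ≤ x i ∧ x i < b i}

/-- Open axis-parallel box `Π_i (aᵢ, bᵢ)`. -/
def openBox (a b : Fin d → ℝ) : Set (Rd d) := {x | ∀ i, a i < x i ∧ x i < b i}

/-- Closed axis-parallel box `Π_i [aᵢ, bᵢ]`. -/
def closedBox (a b : Fin d → ℝ) : Set (Rd d) := {x | ∀ i, a i ≤ x i ∧ x i ≤ b i}

/-- Half-open axis-parallel box with integer corners. -/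
def intBox (a b : Zd d) : Set (Rd d) := {x | ∀ i, (a i : ℝ) ≤ x i ∧ x i < (b i : ℝ)}

/-- The periodic cell minimization `W^{(k)}(ω; F)`. -/
def Wper (τ : Zd d → Ω → Ω) (E0 : Finset (Zd d)) (V : Zd d → Ω → Rn n → ℝ)
    (k : ℕ) (ω : Ω) (F : Rd d →L[ℝ] Rn n) : ℝ :=
  ⨅ φ : {φ : Zd d → Rn n // ∀ z z' : Zd d, φ (z + k • z') = φ z},
    ((k : ℝ) ^ d)⁻¹ * energy1 τ E0 V ω (fun z => F (toRd z) + φ.1 z) (cube d k)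


/-!
Given almost minimizers `φᵢ` for the cells `Aᵢ`, their sum `Φ = ∑ᵢ φᵢ` is admissible for
`A = ⋃ᵢ Aᵢ`: each `φᵢ` vanishes within distance `R` of `Aᵢᶜ ⊇ Aᶜ`. Since every interaction
`z ↦ z + b`, `b ∈ ℰ₀`, has length at most `R`, the only summand of `Φ` seen by the energy at a
point of `Aᵢ` is `φᵢ`, so `E₁(g_F + Φ, A) = ∑ᵢ E₁(g_F + φᵢ, Aᵢ)`.
-/

end StochHom

open Function

namespace StochHom

variable {d n : ℕ} {Ω : Type*}

lemma toRd_add (z w : Zd d) : toRd (z + w) = toRd z + toRd w := by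
  ext i
  simp [toRd]

lemma dist_toRd_add_self (z b : Zd d) : dist (toRd (z + b)) (toRd z) = ‖toRd b‖ := by
  rw [dist_eq_norm, toRd_add, add_sub_cancel_left]

lemma irange_nonneg (E0 : Finset (Zd d)) : 0 ≤ irange d E0 :=
  le_max_of_le_left (by positivity)

lemma norm_toRd_le_irange {E0 : Finset (Zd d)} {b : Zd d} (hb : b ∈ E0) :
    ‖toRd b‖ ≤ irange d E0 :=
  le_max_of_le_right <| le_csSup ((E0 : Set (Zd d)).toFinite.image _).bddAbove ⟨b, hb, rfl⟩

lemma intBox_compl_nonempty (a b : Zd d) (hd : d ≠ 0) : (intBox a b)ᶜ.Nonempty :=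
  ⟨toRd b, fun h => (h ⟨0, Nat.pos_of_ne_zero hd⟩).2.false⟩

/-- The perturbations allowed in `mF τ E0 V ω F A`. -/
def IsAdmissible (E0 : Finset (Zd d)) (A : Set (Rd d)) (φ : Zd d → Rn n) : Prop :=
  ∀ z : Zd d, infDist (toRd z) Aᶜ ≤ irange d E0 → φ z = 0

namespace IsAdmissible

variable {E0 : Finset (Zd d)} {A B : Set (Rd d)} {φ : Zd d → Rn n}

lemma eq_zero_of_dist_le (hφ : IsAdmissible E0 A φ) {z : Zd d} {x : Rd d} (hx : x ∉ A)
    (hzx : dist (toRd z) x ≤ irange d E0) : φ z = 0 :=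
  hφ z ((infDist_le_dist_of_mem hx).trans hzx)

lemma mono (hφ : IsAdmissible E0 A φ) (hAB : A ⊆ B) (hB : Bᶜ.Nonempty) :
    IsAdmissible E0 B φ := fun z hz =>
  hφ z ((infDist_le_infDist_of_subset (compl_subset_compl.mpr hAB) hB).trans hz)

lemma sum {ι : Type*} [Fintype ι] {φ : ι → Zd d → Rn n} (hφ : ∀ i, IsAdmissible E0 A (φ i)) :
    IsAdmissible E0 A fun z => ∑ i, φ i z := fun z hz =>
  Finset.sum_eq_zero fun i _ => hφ i z hz

end IsAdmissible

lemma sum_apply_eq_of_mem {ι : Type*} [Fintype ι] {E0 : Finset (Zd d)} {A : ι → Set (Rd d)}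
    {φ : ι → Zd d → Rn n} (hφ : ∀ i, IsAdmissible E0 (A i) (φ i))
    (hdisj : Pairwise (Disjoint on A)) {i : ι} {z w : Zd d} (hz : toRd z ∈ A i)
    (hw : dist (toRd w) (toRd z) ≤ irange d E0) : ∑ j, φ j w = φ i w :=
  Finset.sum_eq_single i
    (fun j _ hji => (hφ j).eq_zero_of_dist_le ((hdisj hji.symm).notMem_of_mem_left hz) hw)
    (fun hi => (hi (Finset.mem_univ i)).elim)

section Energy

variable (τ : Zd d → Ω → Ω) (E0 : Finset (Zd d))
  (V : Zd d → Ω → Rn n → ℝ) (ω : Ω)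

lemma energy1_nonneg (hVnn : ∀ b ∈ E0, ∀ (ω : Ω) (r : Rn n), 0 ≤ V b ω r)
    (u : Zd d → Rn n) (A : Set (Rd d)) : 0 ≤ energy1 τ E0 V ω u A :=
  tsum_nonneg fun _ => by
    split_ifs
    exacts [Finset.sum_nonneg fun b hb => hVnn b hb _ _, le_rfl]

lemma energy1_congr {u v : Zd d → Rn n} {A : Set (Rd d)}
    (huv : ∀ z w, toRd z ∈ A → dist (toRd w) (toRd z) ≤ irange d E0 → u w = v w) :
    energy1 τ E0 V ω u A = energy1 τ E0 V ω v A := by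
  refine tsum_congr fun z => ?_
  split_ifs with hz
  · refine Finset.sum_congr rfl fun b hb => ?_
    rw [huv z z hz (by simp [irange_nonneg]),
      huv z (z + b) hz ((dist_toRd_add_self z b).trans_le (norm_toRd_le_irange hb))]
  · rfl

/-- Only `≤`: when the total energy is infinite, the junk value of `tsum` is `0`. -/
lemma energy1_iUnion_le_sum {ι : Type*} [Fintype ι]
    (hVnn : ∀ b ∈ E0, ∀ (ω : Ω) (r : Rn n), 0 ≤ V b ω r) (u : Zd d → Rn n)
    {A : ι → Set (Rd d)} (hdisj : Pairwise (Disjoint on A)) :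
    energy1 τ E0 V ω u (⋃ i, A i) ≤ ∑ i, energy1 τ E0 V ω u (A i) := by
  set e : Zd d → ℝ := fun z => ∑ b ∈ E0, V b (τ z ω) ((‖toRd b‖)⁻¹ • (u (z + b) - u z))
  have he : ∀ z, 0 ≤ e z := fun z => Finset.sum_nonneg fun b hb => hVnn b hb _ _
  set g : ι → Zd d → ℝ := fun i => (toRd ⁻¹' A i).indicator e
  have hsplit : energy1 τ E0 V ω u (⋃ i, A i) = ∑' z, ∑ i, g i z := by
    refine tsum_congr fun z => ?_
    rw [← Finset.indicator_biUnion_apply Finset.univ _ fun i _ j _ hij => (hdisj hij).preimage toRd]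
    simp only [Finset.mem_univ, iUnion_true, ← preimage_iUnion, indicator_apply, mem_preimage]
    rfl
  rw [hsplit]
  by_cases hsum : Summable fun z => ∑ i, g i z
  · rw [Summable.tsum_finsetSum fun i _ => hsum.of_nonneg_of_le
      (fun z => indicator_nonneg (fun z _ => he z) z)
      (fun z => Finset.single_le_sum (f := fun j => g j z)
        (fun j _ => indicator_nonneg (fun z _ => he z) z) (Finset.mem_univ i))]
    rfl
  · rw [tsum_eq_zero_of_not_summable hsum]
    exact Finset.sum_nonneg fun i _ => energy1_nonneg τ E0 V ω hVnn u (A i)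

variable (F : Rd d →L[ℝ] Rn n)

lemma mF_le_energy1 (hVnn : ∀ b ∈ E0, ∀ (ω : Ω) (r : Rn n), 0 ≤ V b ω r)
    {A : Set (Rd d)} {φ : Zd d → Rn n} (hφ : IsAdmissible E0 A φ) :
    mF τ E0 V ω F A ≤ energy1 τ E0 V ω (fun z => F (toRd z) + φ z) A := by
  refine ciInf_le ?_ (⟨φ, hφ⟩ : {ψ // IsAdmissible E0 A ψ})
  exact ⟨0, by rintro _ ⟨ψ, rfl⟩; exact energy1_nonneg τ E0 V ω hVnn _ _⟩

end Energy

lemma le_sum_ciInf {ι : Type*} [Fintype ι] {X : ι → Type*} [∀ i, Nonempty (X i)]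
    {f : ∀ i, X i → ℝ} {a : ℝ} (h : ∀ x : ∀ i, X i, a ≤ ∑ i, f i (x i)) :
    a ≤ ∑ i, ⨅ y, f i y := by
  refine le_of_forall_pos_le_add fun ε hε => ?_
  obtain ⟨δ, hδ, hδε⟩ : ∃ δ > 0, Fintype.card ι * δ ≤ ε :=
    ⟨ε / (Fintype.card ι + 1), by positivity, by
      rw [mul_div_assoc', div_le_iff₀ (by positivity)]; nlinarith⟩
  choose x hx using fun i => exists_lt_of_ciInf_lt (lt_add_of_pos_right (⨅ y, f i y) hδ)
  calc a ≤ ∑ i, f i (x i) := h x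
    _ ≤ ∑ i, ((⨅ y, f i y) + δ) := Finset.sum_le_sum fun i _ => (hx i).le
    _ = ∑ i, (⨅ y, f i y) + Fintype.card ι * δ := by
      rw [Finset.sum_add_distrib, Finset.sum_const, Finset.card_univ, nsmul_eq_mul]
    _ ≤ ∑ i, (⨅ y, f i y) + ε := by gcongr

theorem mF_iUnion_le_sum (τ : Zd d → Ω → Ω)
    (E0 : Finset (Zd d)) (V : Zd d → Ω → Rn n → ℝ)
    (hVnn : ∀ b ∈ E0, ∀ (ω : Ω) (r : Rn n), 0 ≤ V b ω r) (ω : Ω) (F : Rd d →L[ℝ] Rn n)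
    {ι : Type*} [Fintype ι] {A : ι → Set (Rd d)} (hdisj : Pairwise (Disjoint on A))
    (hA : (⋃ i, A i)ᶜ.Nonempty) :
    mF τ E0 V ω F (⋃ i, A i) ≤ ∑ i, mF τ E0 V ω F (A i) := by
  have : ∀ i, Nonempty {φ : Zd d → Rn n // IsAdmissible E0 (A i) φ} :=
    fun i => ⟨⟨0, fun _ _ => rfl⟩⟩
  refine le_sum_ciInf (X := fun i => {φ // IsAdmissible E0 (A i) φ}) fun φ => ?_
  have hφ : ∀ i, IsAdmissible E0 (A i) (φ i).1 := fun i => (φ i).2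
  calc mF τ E0 V ω F (⋃ i, A i)
      ≤ energy1 τ E0 V ω (fun z => F (toRd z) + ∑ i, (φ i).1 z) (⋃ i, A i) :=
        mF_le_energy1 τ E0 V ω F hVnn <|
          IsAdmissible.sum fun i => (hφ i).mono (subset_iUnion A i) hA
    _ ≤ ∑ i, energy1 τ E0 V ω (fun z => F (toRd z) + ∑ i, (φ i).1 z) (A i) :=
        energy1_iUnion_le_sum τ E0 V ω hVnn _ hdisj
    _ = ∑ i, energy1 τ E0 V ω (fun z => F (toRd z) + (φ i).1 z) (A i) :=
        Finset.sum_congr rfl fun i _ => energy1_congr τ E0 V ω fun z w hz hw => by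
          rw [sum_apply_eq_of_mem hφ hdisj hz hw]

theorem subadditivity_mF_general
    {d n : ℕ} (hd : 2 ≤ d)
    {Ω : Type*}
    (τ : Zd d → Ω → Ω)
    (E0 : Finset (Zd d))
    (V : Zd d → Ω → Rn n → ℝ)
    (hVnn : ∀ b ∈ E0, ∀ (ω : Ω) (r : Rn n), 0 ≤ V b ω r)
    (F : Rd d →L[ℝ] Rn n) (ω : Ω) (M : ℕ)
    (aA bA : Zd d) (a b : Fin M → Zd d)
    (hdisj : ∀ i j : Fin M, i ≠ j → Disjoint (intBox (a i) (b i)) (intBox (a j) (b j)))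
    (hunion : intBox aA bA = ⋃ i : Fin M, intBox (a i) (b i)) :
    mF τ E0 V ω F (intBox aA bA) ≤ ∑ i : Fin M, mF τ E0 V ω F (intBox (a i) (b i)) := by
  have hA := intBox_compl_nonempty aA bA (by omega)
  rw [hunion] at hA ⊢
  exact mF_iUnion_le_sum τ E0 V hVnn ω F (fun i j => hdisj i j) hA

/-- subadditivity of the localized minimal energies. -/
theorem subadditivity_mF
    {d n : ℕ} (hd : 2 ≤ d) (hn : 1 ≤ n)
    {Ω : Type*} [MeasurableSpace Ω] (P : Measure Ω) [IsProbabilityMeasure P]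
    (τ : Zd d → Ω → Ω) (hτ0 : τ 0 = id)
    (hτadd : ∀ x y : Zd d, τ (x + y) = τ x ∘ τ y)
    (hτmp : ∀ z : Zd d, MeasurePreserving (τ z) P P)
    (hτerg : ∀ B : Set Ω, MeasurableSet B → (∀ z : Zd d, τ z ⁻¹' B = B) → P B = 0 ∨ P B = 1)
    (E0 : Finset (Zd d)) (hE00 : (0 : Zd d) ∉ E0) (hE0b : ∀ i : Fin d, stdb i ∈ E0)
    (p c₁ : ℝ) (hp : 1 < p) (hc₁ : 0 < c₁)
    (V : Zd d → Ω → Rn n → ℝ)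
    (hVmeas : ∀ b ∈ E0, Measurable fun q : Ω × Rn n => V b q.1 q.2)
    (hVcont : ∀ b ∈ E0, ∀ ω : Ω, Continuous (V b ω))
    (hVnn : ∀ b ∈ E0, ∀ (ω : Ω) (r : Rn n), 0 ≤ V b ω r)
    (lam : Zd d → Ω → ℝ)
    (hlammeas : ∀ b ∈ E0, Measurable (lam b))
    (hlamnn : ∀ b ∈ E0, ∀ ω : Ω, 0 ≤ lam b ω)
    (hgrowth : ∀ b ∈ E0, ∀ (ω : Ω) (r : Rn n),
      lam b ω * (‖r‖ ^ p / c₁ - c₁) ≤ V b ω r ∧ V b ω r ≤ c₁ * (1 + lam b ω * (‖r‖ ^ p + 1)))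
    (F : Rd d →L[ℝ] Rn n) (ω : Ω) (M : ℕ)
    (aA bA : Zd d) (a b : Fin M → Zd d)
    (hdisj : ∀ i j : Fin M, i ≠ j → Disjoint (intBox (a i) (b i)) (intBox (a j) (b j)))
    (hunion : intBox aA bA = ⋃ i : Fin M, intBox (a i) (b i)) :
    mF τ E0 V ω F (intBox aA bA) ≤ ∑ i : Fin M, mF τ E0 V ω F (intBox (a i) (b i)) :=
  subadditivity_mF_general hd τ E0 V hVnn F ω M aA bA a b hdisj hunion

end StochHom
end
end

section
/- Explicit homogenization of a layered quadratic medium, direction e₁ (Remark 3.5 of the paper): for every weight ω : ℤ → (0,∞), every integer k ≥ 1 and every ℓ ∈ ℝ, the infimum over all k-periodic functions φ : ℤ^d → ℝ of (1/k^d) Σ_{z∈ℤ^d∩[0,k)^d} Σ_{i=1}^d ω(z·e₁) |ℓ·δ_{i1} + φ(z+e_i) − φ(z)|² equals ℓ² · ((1/k) Σ_{x=0}^{k−1} ω(x)^{−1})^{−1}, i.e. the harmonic mean of the weights ω(0),…,ω(k−1) times ℓ². -/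
open MeasureTheory Filter Set
open scoped Topology

noncomputable section

namespace Layered

/-- The standard basis vectors `eᵢ` of `ℤ^d`. -/
def stdb {d : ℕ} (i : Fin d) : Fin d → ℤ := fun j => if j = i then 1 else 0

/-- A function `φ : ℤ^d → ℝ` is `k`-periodic if `φ(z + k z') = φ(z)` for all `z, z' ∈ ℤ^d`. -/
def kPeriodic {d : ℕ} (k : ℕ) (φ : (Fin d → ℤ) → ℝ) : Prop :=
  ∀ z z' : Fin d → ℤ, φ (z + k • z') = φ z

/-- The lattice point of `ℤ^d ∩ [0,k)^d` corresponding to `w : Fin d → Fin k`. -/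
def pt {d k : ℕ} (w : Fin d → Fin k) : Fin d → ℤ := fun j => ((w j : ℕ) : ℤ)

/-! The minimiser is a one-dimensional corrector: a periodic function of the first coordinate
whose increments make the flux `ω x * (ℓ + φ (x + 1) - φ x)` equal to the constant `ℓ * H`,
`H` the harmonic mean of the weights; its energy is `ℓ² H`. For the lower bound, keep only the
differences in direction `e₁` and complete the square against that constant flux:
`ω a² ≥ 2 ℓH a - (ℓH)² / ω`. By periodicity the gradients `a` average to `ℓ` over the cell, and
the right-hand side then sums to `ℓ² H`. -/

open Finset
open scoped Fin.IntCast

variable {d k : ℕ} {ω : ℤ → ℝ}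

theorem kPeriodic.apply_eq_of_modEq {φ : (Fin d → ℤ) → ℝ} (hφ : kPeriodic k φ)
    {z z' : Fin d → ℤ} (h : ∀ j, z j ≡ z' j [ZMOD k]) : φ z = φ z' := by
  have hz : z = z' + k • fun j => (z j - z' j) / k := by
    funext j
    simp [Int.mul_ediv_cancel' (h j).symm.dvd]
  rw [hz, hφ]

theorem val_intCast_modEq [NeZero k] (x : ℤ) : (((x : Fin k) : ℕ) : ℤ) ≡ x [ZMOD k] := by
  rw [Fin.val_intCast, Int.toNat_of_nonneg (Int.emod_nonneg _ (by simp [NeZero.ne k]))]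
  exact Int.mod_modEq x k

theorem pt_add_modEq (w c : Fin d → Fin k) (j : Fin d) :
    pt (w + c) j ≡ pt w j + pt c j [ZMOD k] := by
  simp only [pt, Pi.add_apply, Fin.val_add]
  push_cast
  exact Int.mod_modEq _ _

theorem kPeriodic.sum_pt_add [NeZero k] {φ : (Fin d → ℤ) → ℝ} (hφ : kPeriodic k φ)
    (v : Fin d → ℤ) : ∑ w : Fin d → Fin k, φ (pt w + v) = ∑ w : Fin d → Fin k, φ (pt w) := by
  let c : Fin d → Fin k := fun j => (v j : Fin k)
  calc ∑ w, φ (pt w + v) = ∑ w, φ (pt (w + c)) :=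
        sum_congr rfl fun w _ => hφ.apply_eq_of_modEq fun j =>
          ((pt_add_modEq w c j).trans (Int.ModEq.add_left _ (val_intCast_modEq (v j)))).symm
    _ = ∑ w, φ (pt w) := Fintype.sum_equiv (Equiv.addRight c) _ _ fun _ => rfl

theorem sum_pt_apply [NeZero d] (j : Fin d) (f : ℤ → ℝ) :
    ∑ w : Fin d → Fin k, f (pt w j) = k ^ (d - 1) * ∑ x ∈ range k, f x := by
  have := Fintype.sum_piFinset_apply (fun x : Fin k => f ((x : ℕ) : ℤ)) univ j
  rw [Fintype.piFinset_univ] at this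
  rw [← Fin.sum_univ_eq_sum_range (fun x => f x)]
  simpa [pt] using this

theorem two_mul_mul_sub_sq_mul_inv_le {c : ℝ} (hc : 0 < c) (A a : ℝ) :
    2 * A * a - A ^ 2 * c⁻¹ ≤ c * a ^ 2 := by
  have key : c * a ^ 2 - (2 * A * a - A ^ 2 * c⁻¹) = (c * a - A) ^ 2 * c⁻¹ := by
    field_simp
    ring
  rw [← sub_nonneg, key]
  positivity

def harmonicMean (ω : ℤ → ℝ) (k : ℕ) : ℝ := ((k : ℝ)⁻¹ * ∑ x ∈ range k, (ω x)⁻¹)⁻¹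

theorem sum_inv_weight_pos (hω : ∀ x, 0 < ω x) (hk : k ≠ 0) : 0 < ∑ x ∈ range k, (ω x)⁻¹ :=
  sum_pos (fun x _ => inv_pos.2 (hω x)) (nonempty_range_iff.2 hk)

theorem harmonicMean_pos (hω : ∀ x, 0 < ω x) (hk : k ≠ 0) : 0 < harmonicMean ω k := by
  have : (0 : ℝ) < k := by exact_mod_cast Nat.pos_of_ne_zero hk
  unfold harmonicMean
  have := sum_inv_weight_pos hω hk
  positivity

theorem harmonicMean_mul_sum_inv (hω : ∀ x, 0 < ω x) (hk : k ≠ 0) :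
    harmonicMean ω k * ∑ x ∈ range k, (ω x)⁻¹ = k := by
  have := (sum_inv_weight_pos hω hk).ne'
  rw [harmonicMean, mul_inv, inv_inv, mul_assoc, inv_mul_cancel₀ this, mul_one]

theorem sum_inv_weight_pt [NeZero d] (hk : k ≠ 0) :
    ∑ w : Fin d → Fin k, (ω (pt w 0))⁻¹ = k ^ d * (harmonicMean ω k)⁻¹ := by
  have hk' : (k : ℝ) ≠ 0 := by exact_mod_cast hk
  rw [sum_pt_apply 0 fun x => (ω x)⁻¹, harmonicMean, inv_inv, pow_sub₀ _ hk' NeZero.one_le,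
    pow_one, mul_assoc]

def cellEnergy [NeZero d] (ω : ℤ → ℝ) (k : ℕ) (ℓ : ℝ) (φ : (Fin d → ℤ) → ℝ) : ℝ :=
  ((k : ℝ) ^ d)⁻¹ * ∑ w : Fin d → Fin k, ∑ i : Fin d,
    ω (pt w 0) * |(if i = 0 then ℓ else 0) + φ (pt w + stdb i) - φ (pt w)| ^ 2

theorem kPeriodic.sum_slope_add_grad [NeZero d] [NeZero k] {φ : (Fin d → ℤ) → ℝ}
    (hφ : kPeriodic k φ) (ℓ : ℝ) :
    ∑ w : Fin d → Fin k, (ℓ + φ (pt w + stdb 0) - φ (pt w)) = k ^ d * ℓ := by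
  rw [sum_sub_distrib, sum_add_distrib, hφ.sum_pt_add, add_sub_cancel_right, sum_const,
    card_univ, Fintype.card_fun, Fintype.card_fin, Fintype.card_fin, nsmul_eq_mul]
  push_cast
  ring

theorem sq_mul_harmonicMean_le_cellEnergy [NeZero d] (hω : ∀ x, 0 < ω x) (hk : k ≠ 0)
    {φ : (Fin d → ℤ) → ℝ} (hφ : kPeriodic k φ) (ℓ : ℝ) :
    ℓ ^ 2 * harmonicMean ω k ≤ cellEnergy ω k ℓ φ := by
  have : NeZero k := ⟨hk⟩
  set H := harmonicMean ω k
  set a : (Fin d → Fin k) → ℝ := fun w => ℓ + φ (pt w + stdb 0) - φ (pt w)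
  have hH := (harmonicMean_pos hω hk).ne'
  have hkd : (k : ℝ) ^ d ≠ 0 := pow_ne_zero _ (by exact_mod_cast hk)
  have hdiag (w : Fin d → Fin k) : ω (pt w 0) * a w ^ 2 ≤ ∑ i : Fin d,
      ω (pt w 0) * |(if i = 0 then ℓ else 0) + φ (pt w + stdb i) - φ (pt w)| ^ 2 := by
    refine (single_le_sum (fun i _ => ?_) (mem_univ 0)).trans_eq' ?_
    · exact mul_nonneg (hω _).le (sq_nonneg _)
    · simp [a, sq_abs]
  calc ℓ ^ 2 * H
      = ((k : ℝ) ^ d)⁻¹ * ∑ w, (2 * (ℓ * H) * a w - (ℓ * H) ^ 2 * (ω (pt w 0))⁻¹) := by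
        rw [sum_sub_distrib, ← mul_sum, ← mul_sum, hφ.sum_slope_add_grad, sum_inv_weight_pt hk]
        field_simp
        ring
    _ ≤ ((k : ℝ) ^ d)⁻¹ * ∑ w, ω (pt w 0) * a w ^ 2 := by
        gcongr with w
        exact two_mul_mul_sub_sq_mul_inv_le (hω _) _ _
    _ ≤ cellEnergy ω k ℓ φ := by
        unfold cellEnergy
        gcongr with w
        exact hdiag w

def periodize (k : ℕ) (g : ℕ → ℝ) (n : ℤ) : ℝ := g (n % k).toNat

theorem periodize_add_mul (g : ℕ → ℝ) (n m : ℤ) :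
    periodize k g (n + m * k) = periodize k g n := by
  simp [periodize]

theorem periodize_natCast {g : ℕ → ℝ} (hg : g k = g 0) {m : ℕ} (hm : m ≤ k) :
    periodize k g m = g m := by
  rw [periodize, ← Int.natCast_mod, Int.toNat_natCast]
  rcases hm.lt_or_eq with hm | rfl
  · rw [Nat.mod_eq_of_lt hm]
  · rw [Nat.mod_self, hg]

def layerCorrector [NeZero d] (ω : ℤ → ℝ) (k : ℕ) (ℓ : ℝ) (z : Fin d → ℤ) : ℝ :=
  periodize k (fun m => ∑ x ∈ range m, (ℓ * harmonicMean ω k * (ω x)⁻¹ - ℓ)) (z 0)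

theorem kPeriodic_layerCorrector [NeZero d] (ℓ : ℝ) :
    kPeriodic k (layerCorrector (d := d) ω k ℓ) := by
  intro z z'
  have : (z + k • z') 0 = z 0 + z' 0 * k := by simp [mul_comm]
  simp only [layerCorrector, this, periodize_add_mul]

theorem slope_add_grad_layerCorrector [NeZero d] (hω : ∀ x, 0 < ω x) (hk : k ≠ 0) (ℓ : ℝ)
    (w : Fin d → Fin k) (i : Fin d) :
    (if i = 0 then ℓ else 0) + layerCorrector ω k ℓ (pt w + stdb i) - layerCorrector ω k ℓ (pt w)
      = if i = 0 then ℓ * harmonicMean ω k * (ω (pt w 0))⁻¹ else 0 := by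
  split_ifs with hi
  · subst hi
    have hperiod : ∑ x ∈ range k, (ℓ * harmonicMean ω k * (ω x)⁻¹ - ℓ) = 0 := by
      rw [sum_sub_distrib, ← mul_sum, mul_assoc, harmonicMean_mul_sum_inv hω hk]
      simp [mul_comm]
    have hw : (pt w + stdb (0 : Fin d)) 0 = ((w 0 + 1 : ℕ) : ℤ) := by simp [pt, stdb]
    have hw0 : pt w 0 = ((w 0 : ℕ) : ℤ) := rfl
    rw [layerCorrector, layerCorrector, hw, hw0, periodize_natCast, periodize_natCast,
      sum_range_succ]
    · ring
    all_goals simp [hperiod, (w 0).isLt.le, Nat.succ_le_of_lt (w 0).isLt]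
  · have hw : (pt w + stdb i) 0 = pt w 0 := by simp [stdb, Ne.symm hi]
    simp [layerCorrector, hw]

theorem cellEnergy_layerCorrector [NeZero d] (hω : ∀ x, 0 < ω x) (hk : k ≠ 0) (ℓ : ℝ) :
    cellEnergy (d := d) ω k ℓ (layerCorrector ω k ℓ) = ℓ ^ 2 * harmonicMean ω k := by
  have hrow (w : Fin d → Fin k) : ∑ i : Fin d, ω (pt w 0) *
      |(if i = 0 then ℓ else 0) + layerCorrector ω k ℓ (pt w + stdb i)
        - layerCorrector ω k ℓ (pt w)| ^ 2 = (ℓ * harmonicMean ω k) ^ 2 * (ω (pt w 0))⁻¹ := by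
    simp only [slope_add_grad_layerCorrector hω hk]
    rw [sum_eq_single_of_mem 0 (mem_univ _) fun i _ hi => by simp [hi], if_pos rfl, sq_abs]
    field_simp [(hω (pt w 0)).ne']
  have hkd : (k : ℝ) ^ d ≠ 0 := pow_ne_zero _ (by exact_mod_cast hk)
  have hH := (harmonicMean_pos hω hk).ne'
  rw [cellEnergy, sum_congr rfl fun w _ => hrow w, ← mul_sum, sum_inv_weight_pt hk]
  field_simp

theorem layered_cell_e1_general
    (d : ℕ) [NeZero d] (ω : ℤ → ℝ) (hω : ∀ x, 0 < ω x)
    (k : ℕ) (hk : 1 ≤ k) (ℓ : ℝ) :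
    (⨅ φ : {φ : (Fin d → ℤ) → ℝ // kPeriodic k φ},
        ((k : ℝ) ^ d)⁻¹ * ∑ w : Fin d → Fin k, ∑ i : Fin d,
          ω (pt w 0) *
            |(if i = 0 then ℓ else 0) + φ.1 (pt w + stdb i) - φ.1 (pt w)| ^ 2) =
      ℓ ^ 2 * ((k : ℝ)⁻¹ * ∑ x ∈ Finset.range k, (ω (x : ℤ))⁻¹)⁻¹ := by
  have hk0 : k ≠ 0 := by omega
  let corrector : {φ : (Fin d → ℤ) → ℝ // kPeriodic k φ} :=
    ⟨layerCorrector ω k ℓ, kPeriodic_layerCorrector ℓ⟩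
  have hleast : IsLeast
      (range fun φ : {φ : (Fin d → ℤ) → ℝ // kPeriodic k φ} => cellEnergy ω k ℓ φ.1)
      (ℓ ^ 2 * harmonicMean ω k) :=
    ⟨⟨corrector, cellEnergy_layerCorrector hω hk0 ℓ⟩,
      forall_mem_range.2 fun φ => sq_mul_harmonicMean_le_cellEnergy hω hk0 φ.2 ℓ⟩
  have : Nonempty {φ : (Fin d → ℤ) → ℝ // kPeriodic k φ} := ⟨corrector⟩
  exact hleast.isGLB.ciInf_eq

/-- explicit homogenization of a layered quadratic medium, direction `e₁`,
Remark 3.5 of the paper: the `k`-periodic cell problem with slope `ℓ` in direction `e₁`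
has value `ℓ²` times the harmonic mean of the weights `ω(0),…,ω(k−1)`. -/
theorem layered_cell_e1
    (d : ℕ) (hd : 2 ≤ d) [NeZero d] (ω : ℤ → ℝ) (hω : ∀ x, 0 < ω x)
    (k : ℕ) (hk : 1 ≤ k) (ℓ : ℝ) :
    (⨅ φ : {φ : (Fin d → ℤ) → ℝ // kPeriodic k φ},
        ((k : ℝ) ^ d)⁻¹ * ∑ w : Fin d → Fin k, ∑ i : Fin d,
          ω (pt w 0) *
            |(if i = 0 then ℓ else 0) + φ.1 (pt w + stdb i) - φ.1 (pt w)| ^ 2) =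
      ℓ ^ 2 * ((k : ℝ)⁻¹ * ∑ x ∈ Finset.range k, (ω (x : ℤ))⁻¹)⁻¹ :=
  layered_cell_e1_general d ω hω k hk ℓ

end Layered
end
end
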